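/- Let ε ∈ (0,1), γ ∈ (0,1), and choose M_ε = T^{-1} ln(ε^{-γ}). If ‖U_T − U_T^ε‖ ≤ ε, then at the initial time t = 0 the reconstruction error satisfies ‖U(0) − P^ε U^ε(0)‖ ≤ (T / ln(ε^{-γ})) ‖U′(0)‖ + ε^{1−γ}, where U′(0) = − Σ_{i=1}^n λ_i e^{λ_i T} ⟨U_T, φ_i⟩ φ_i. (Initial-time estimate from the remark after Theorem 4.) -/

import Mathlib

/-!
Split the data along the orthonormal basis into the modes with `λ_i ≤ M` and the rest.
On the rest, `1 ≤ λ_i / M`, so the discarded part of the exact solution is at most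
`M⁻¹ ‖U′(0)‖`. On the kept modes, the amplification `e^{λ_i T}` is at most `e^{M T}`, so by
Bessel's inequality the propagated noise is at most `e^{M T} ‖U_T − U_T^ε‖`. The choice
`M = T⁻¹ ln ε^{-γ}` makes `M⁻¹ = T / ln ε^{-γ}` and `e^{M T} ε = ε^{1-γ}`.
-/

open scoped RealInnerProductSpace
open Finset Real

namespace Orthonormal

variable {ι E : Type*} [NormedAddCommGroup E] [InnerProductSpace ℝ E] {v : ι → E}

theorem norm_sum_smul_sq (hv : Orthonormal ℝ v) (s : Finset ι) (c : ι → ℝ) :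
    ‖∑ i ∈ s, c i • v i‖ ^ 2 = ∑ i ∈ s, c i ^ 2 := by
  rw [← real_inner_self_eq_norm_sq, hv.inner_sum]
  simp [sq]

theorem norm_sum_smul_le_of_abs_le (hv : Orthonormal ℝ v) {s t : Finset ι} (hst : s ⊆ t)
    {a b : ι → ℝ} (hab : ∀ i ∈ s, |a i| ≤ |b i|) :
    ‖∑ i ∈ s, a i • v i‖ ≤ ‖∑ i ∈ t, b i • v i‖ := by
  rw [← sq_le_sq₀ (norm_nonneg _) (norm_nonneg _), hv.norm_sum_smul_sq, hv.norm_sum_smul_sq]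
  calc ∑ i ∈ s, a i ^ 2 ≤ ∑ i ∈ s, b i ^ 2 := sum_le_sum fun i hi => sq_le_sq.2 (hab i hi)
    _ ≤ ∑ i ∈ t, b i ^ 2 := sum_le_sum_of_subset_of_nonneg hst fun _ _ _ => sq_nonneg _

theorem norm_sum_inner_smul_le (hv : Orthonormal ℝ v) (s : Finset ι) (x : E) :
    ‖∑ i ∈ s, ⟪x, v i⟫ • v i‖ ≤ ‖x‖ := by
  rw [← sq_le_sq₀ (norm_nonneg _) (norm_nonneg _), hv.norm_sum_smul_sq]
  simpa [real_inner_comm] using hv.sum_inner_products_le (s := s) x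

theorem norm_sum_filter_not_le_le (hv : Orthonormal ℝ v) (s : Finset ι) (lam a : ι → ℝ)
    {M : ℝ} (hM : 0 < M) :
    ‖∑ i ∈ s.filter (fun i => ¬ lam i ≤ M), a i • v i‖
      ≤ M⁻¹ * ‖∑ i ∈ s, (lam i * a i) • v i‖ := by
  have hscale : ∀ i ∈ s.filter (fun i => ¬ lam i ≤ M), |a i| ≤ |M⁻¹ * (lam i * a i)| := by
    intro i hi
    have hlam : M < lam i := not_le.1 (mem_filter.1 hi).2
    rw [← mul_assoc, abs_mul, abs_of_pos (mul_pos (inv_pos.2 hM) (hM.trans hlam))]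
    exact le_mul_of_one_le_left (abs_nonneg _) ((one_le_inv_mul₀ hM).2 hlam.le)
  calc _ ≤ ‖∑ i ∈ s, (M⁻¹ * (lam i * a i)) • v i‖ :=
        hv.norm_sum_smul_le_of_abs_le (filter_subset _ _) hscale
    _ = M⁻¹ * ‖∑ i ∈ s, (lam i * a i) • v i‖ := by
        simp_rw [mul_smul, ← smul_sum, norm_smul, norm_inv, norm_of_nonneg hM.le]

theorem norm_sum_filter_le_exp_le (hv : Orthonormal ℝ v) (s : Finset ι) (lam : ι → ℝ)
    {M T : ℝ} (hT : 0 ≤ T) (x : E) :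
    ‖∑ i ∈ s.filter (fun i => lam i ≤ M), (exp (lam i * T) * ⟪x, v i⟫) • v i‖
      ≤ exp (M * T) * ‖x‖ := by
  have hamp : ∀ i ∈ s.filter (fun i => lam i ≤ M),
      |exp (lam i * T) * ⟪x, v i⟫| ≤ |exp (M * T) * ⟪x, v i⟫| := by
    intro i hi
    have hlam : lam i * T ≤ M * T := mul_le_mul_of_nonneg_right (mem_filter.1 hi).2 hT
    simp only [abs_mul, abs_exp]
    exact mul_le_mul_of_nonneg_right (exp_le_exp.2 hlam) (abs_nonneg _)
  calc _ ≤ ‖∑ i ∈ s.filter (fun i => lam i ≤ M), (exp (M * T) * ⟪x, v i⟫) • v i‖ :=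
        hv.norm_sum_smul_le_of_abs_le subset_rfl hamp
    _ = exp (M * T) * ‖∑ i ∈ s.filter (fun i => lam i ≤ M), ⟪x, v i⟫ • v i‖ := by
        simp_rw [mul_smul, ← smul_sum, norm_smul, norm_of_nonneg (exp_pos _).le]
    _ ≤ exp (M * T) * ‖x‖ := by gcongr; exact hv.norm_sum_inner_smul_le _ x

theorem norm_sub_spectral_cutoff_le [Fintype ι] (hv : Orthonormal ℝ v) (lam : ι → ℝ)
    {M T : ℝ} (hM : 0 < M) (hT : 0 ≤ T) (x y : E) :
    ‖∑ i, (exp (lam i * T) * ⟪x, v i⟫) • v i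
        - ∑ i ∈ univ.filter (fun i => lam i ≤ M), (exp (lam i * T) * ⟪y, v i⟫) • v i‖
      ≤ M⁻¹ * ‖∑ i, (lam i * exp (lam i * T) * ⟪x, v i⟫) • v i‖ + exp (M * T) * ‖x - y‖ := by
  set a : ι → ℝ := fun i => exp (lam i * T) * ⟪x, v i⟫
  have hsplit : ∑ i, a i • v i
        - ∑ i ∈ univ.filter (fun i => lam i ≤ M), (exp (lam i * T) * ⟪y, v i⟫) • v i
      = ∑ i ∈ univ.filter (fun i => ¬ lam i ≤ M), a i • v i
        + ∑ i ∈ univ.filter (fun i => lam i ≤ M), (exp (lam i * T) * ⟪x - y, v i⟫) • v i := by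
    rw [← sum_filter_add_sum_filter_not univ (fun i => lam i ≤ M)]
    simp only [a, inner_sub_left, mul_sub, sub_smul, sum_sub_distrib]
    abel
  calc _ ≤ ‖∑ i ∈ univ.filter (fun i => ¬ lam i ≤ M), a i • v i‖
        + ‖∑ i ∈ univ.filter (fun i => lam i ≤ M), (exp (lam i * T) * ⟪x - y, v i⟫) • v i‖ := by
        rw [hsplit]; exact norm_add_le _ _
    _ ≤ _ := by
        gcongr
        · simpa only [a, mul_assoc] using hv.norm_sum_filter_not_le_le univ lam a hM
        · exact hv.norm_sum_filter_le_exp_le univ lam hT (x - y)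

end Orthonormal

theorem initial_time_estimate_general (n : ℕ)
    (φ : OrthonormalBasis (Fin n) ℝ (EuclideanSpace ℝ (Fin n)))
    (lam : Fin n → ℝ)
    (ε γ : ℝ) (hε : ε ∈ Set.Ioo (0:ℝ) 1) (hγ : γ ∈ Set.Ioo (0:ℝ) 1)
    (T : ℝ) (hT : 0 < T)
    (Me : ℝ) (hMe : Me = T⁻¹ * Real.log (ε ^ (-γ)))
    (UT UTe : EuclideanSpace ℝ (Fin n))
    (hnoise : ‖UT - UTe‖ ≤ ε) :
    ‖(∑ i : Fin n, (Real.exp (lam i * T) * ⟪UT, φ i⟫) • φ i) -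
      ∑ i ∈ Finset.univ.filter (fun i => lam i ≤ Me),
        (Real.exp (lam i * T) * ⟪UTe, φ i⟫) • φ i‖
      ≤ (T / Real.log (ε ^ (-γ))) *
          ‖-∑ i : Fin n, (lam i * Real.exp (lam i * T) * ⟪UT, φ i⟫) • φ i‖
        + ε ^ (1 - γ) := by
  obtain ⟨hε0, hε1⟩ := hε
  have hlog : 0 < log (ε ^ (-γ)) := by
    rw [log_rpow hε0]
    exact mul_pos_of_neg_of_neg (neg_neg_of_pos hγ.1) (log_neg hε0 hε1)
  have hMe_pos : 0 < Me := by rw [hMe]; positivity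
  have hMe_inv : Me⁻¹ = T / log (ε ^ (-γ)) := by rw [hMe, mul_inv, inv_inv, div_eq_mul_inv]
  have hamp : exp (Me * T) = ε ^ (-γ) := by
    rw [hMe, mul_comm T⁻¹, inv_mul_cancel_right₀ hT.ne', exp_log (rpow_pos_of_pos hε0 _)]
  have hnoise' : exp (Me * T) * ‖UT - UTe‖ ≤ ε ^ (1 - γ) := by
    rw [hamp, sub_eq_neg_add 1, rpow_add hε0, rpow_one]
    gcongr
  calc _ ≤ Me⁻¹ * ‖∑ i, (lam i * exp (lam i * T) * ⟪UT, φ i⟫) • φ i‖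
          + exp (Me * T) * ‖UT - UTe‖ :=
        φ.orthonormal.norm_sub_spectral_cutoff_le lam hMe_pos hT.le UT UTe
    _ ≤ _ := by rw [norm_neg, hMe_inv]; gcongr

/-- Initial-time estimate from the remark after Theorem 4: with
`M_ε = T⁻¹ ln(ε^{-γ})`, at `t = 0`,
`‖U(0) − P^ε U^ε(0)‖ ≤ (T / ln(ε^{-γ})) ‖U′(0)‖ + ε^{1−γ}`. -/
theorem initial_time_estimate (n : ℕ) (hn : 0 < n)
    (φ : OrthonormalBasis (Fin n) ℝ (EuclideanSpace ℝ (Fin n)))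
    (lam : Fin n → ℝ) (hlam : ∀ i, 0 ≤ lam i)
    (ε γ : ℝ) (hε : ε ∈ Set.Ioo (0:ℝ) 1) (hγ : γ ∈ Set.Ioo (0:ℝ) 1)
    (T : ℝ) (hT : 0 < T)
    (Me : ℝ) (hMe : Me = T⁻¹ * Real.log (ε ^ (-γ)))
    (UT UTe : EuclideanSpace ℝ (Fin n))
    (hnoise : ‖UT - UTe‖ ≤ ε) :
    ‖(∑ i : Fin n, (Real.exp (lam i * T) * ⟪UT, φ i⟫) • φ i) -
      ∑ i ∈ Finset.univ.filter (fun i => lam i ≤ Me),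
        (Real.exp (lam i * T) * ⟪UTe, φ i⟫) • φ i‖
      ≤ (T / Real.log (ε ^ (-γ))) *
          ‖-∑ i : Fin n, (lam i * Real.exp (lam i * T) * ⟪UT, φ i⟫) • φ i‖
        + ε ^ (1 - γ) :=
  initial_time_estimate_general n φ lam ε γ hε hγ T hT Me hMe UT UTe hnoise
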